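/- arXiv:2305.12589 — 3 statements merged into one kernel-verified Lean document; each statement's English description precedes it below -/
import Mathlib

section
/- Let m ≥ 1, 0 < σ < 1, 1 ≤ p < ∞ and δ > 0. Let I be a finite or countable index set, let Ω_i ⊂ ℝ^m for each i ∈ I, and set Ω = ⋃_{i∈I} Ω_i and Ω_{i,δ} = { x ∈ Ω : dist(x, Ω_i) < δ }. Then there is a constant C > 0 depending only on m, σ and p such that for every measurable u : Ω → ℝ, |u|_{W^{σ,p}(Ω)}^p ≤ Σ_{i∈I} |u|_{W^{σ,p}(Ω_{i,δ})}^p + C δ^{−σp} ‖u‖_{L^p(Ω)}^p. -/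
/-!
Split the double integral at `‖x - y‖ = δ`. If `x, y ∈ Ω`, `‖x - y‖ < δ` and `y ∈ Ω_i`, then both
`x` and `y` lie in `Ω_{i,δ}`, so the near-diagonal part is bounded by the sum of the local
seminorms. Off the diagonal, `|u x - u y|^p ≤ 2^(p-1) (|u x|^p + |u y|^p)`, which leaves the
integral of `|z|^(-(m+σp))` over `|z| ≥ δ`; by scaling this is `δ^(-σp)` times the integral over
`|z| ≥ 1`, which is finite because `m + σp > m`.
-/

open MeasureTheory Set Metric
open scoped ENNReal
noncomputable section

/-- `ℝ^m` with the Euclidean norm. -/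
abbrev Eucl (n : ℕ) : Type := EuclideanSpace ℝ (Fin n)

/-- The `p`-th power of the Gagliardo seminorm `|u|_{W^{σ,p}(A)}^p`. -/
noncomputable def gagliardoPow (m : ℕ) (σ p : ℝ) (A : Set (Eucl m)) (u : Eucl m → ℝ) : ℝ≥0∞ :=
  ∫⁻ x in A, ∫⁻ y in A, (‖u x - u y‖₊ : ℝ≥0∞) ^ p / (‖x - y‖₊ : ℝ≥0∞) ^ ((m : ℝ) + σ * p)

open Module

section Scaling

variable {E : Type*} [NormedAddCommGroup E] [NormedSpace ℝ E] [FiniteDimensional ℝ E]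
  [MeasurableSpace E] [BorelSpace E] (μ : Measure E) [μ.IsAddHaarMeasure]

theorem lintegral_comp_smul_of_pos {f : E → ℝ≥0∞} (hf : Measurable f) {R : ℝ} (hR : 0 < R) :
    ∫⁻ x, f (R • x) ∂μ = ENNReal.ofReal (R ^ finrank ℝ E)⁻¹ * ∫⁻ x, f x ∂μ := by
  rw [← lintegral_map hf (measurable_const_smul R), Measure.map_addHaar_smul μ hR.ne',
    lintegral_smul_measure, smul_eq_mul, abs_of_pos (by positivity)]

theorem setLIntegral_compl_ball_rpow_neg_enorm {δ : ℝ} (hδ : 0 < δ) (s : ℝ) :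
    ∫⁻ z in (ball (0 : E) δ)ᶜ, ‖z‖ₑ ^ (-(finrank ℝ E + s)) ∂μ =
      ENNReal.ofReal δ ^ (-s) * ∫⁻ z in (ball (0 : E) 1)ᶜ, ‖z‖ₑ ^ (-(finrank ℝ E + s)) ∂μ := by
  set r : ℝ := finrank ℝ E + s
  set F : ℝ → E → ℝ≥0∞ := fun ρ ↦ (ball (0 : E) ρ)ᶜ.indicator fun z ↦ ‖z‖ₑ ^ (-r)
  have hF : ∀ ρ, Measurable (F ρ) := fun ρ ↦
    (measurable_enorm.pow_const _).indicator measurableSet_ball.compl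
  have hscale : ∀ w, F δ (δ • w) = ENNReal.ofReal δ ^ (-r) * F 1 w := by
    intro w
    have hmem : δ • w ∈ (ball (0 : E) δ)ᶜ ↔ w ∈ (ball (0 : E) 1)ᶜ := by
      simp [norm_smul, abs_of_pos hδ, hδ]
    by_cases hw : w ∈ (ball (0 : E) 1)ᶜ
    · simp only [F, indicator_of_mem hw, indicator_of_mem (hmem.2 hw), enorm_smul,
        Real.enorm_of_nonneg hδ.le, ENNReal.mul_rpow_of_ne_top ENNReal.ofReal_ne_top enorm_ne_top]
    · simp only [F, indicator_of_notMem hw, indicator_of_notMem (mt hmem.1 hw), mul_zero]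
  have hcancel : ENNReal.ofReal (δ ^ finrank ℝ E) * ENNReal.ofReal δ ^ (-r) =
      ENNReal.ofReal δ ^ (-s) := by
    rw [ENNReal.ofReal_pow hδ.le, ← ENNReal.rpow_natCast,
      ← ENNReal.rpow_add _ _ (by simpa using hδ) ENNReal.ofReal_ne_top]
    congr 1
    ring
  have key := lintegral_comp_smul_of_pos μ (hF δ) hδ
  simp only [hscale, lintegral_const_mul _ (hF 1)] at key
  rw [← lintegral_indicator measurableSet_ball.compl,
    ← lintegral_indicator measurableSet_ball.compl]
  change ∫⁻ z, F δ z ∂μ = _ * ∫⁻ z, F 1 z ∂μ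
  rw [← hcancel, mul_assoc, key, ← mul_assoc, ← ENNReal.ofReal_mul (by positivity),
    mul_inv_cancel₀ (by positivity), ENNReal.ofReal_one, one_mul]

theorem setLIntegral_compl_ball_rpow_neg_enorm_lt_top {r : ℝ} (hr : (finrank ℝ E : ℝ) < r) :
    ∫⁻ z in (ball (0 : E) 1)ᶜ, ‖z‖ₑ ^ (-r) ∂μ < ∞ := by
  have hr0 : 0 ≤ r := (Nat.cast_nonneg _).trans hr.le
  have h2 : (2 : ℝ≥0∞) ^ r ≠ ∞ := ENNReal.rpow_ne_top_of_nonneg hr0 (by simp)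
  refine lt_of_le_of_lt ?_ (ENNReal.mul_lt_top h2.lt_top (finite_integral_one_add_norm (μ := μ) hr))
  rw [← lintegral_const_mul' _ _ h2, ← lintegral_indicator measurableSet_ball.compl]
  refine lintegral_mono fun z ↦ ?_
  by_cases hz : z ∈ (ball (0 : E) 1)ᶜ
  · have hz1 : 1 ≤ ‖z‖ := by simpa using hz
    rw [indicator_of_mem hz, ← ofReal_norm, ENNReal.ofReal_rpow_of_pos (by positivity),
      ← ENNReal.ofReal_ofNat, ENNReal.ofReal_rpow_of_pos two_pos,
      ← ENNReal.ofReal_mul (by positivity)]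
    refine ENNReal.ofReal_le_ofReal ?_
    calc ‖z‖ ^ (-r) ≤ ((1 + ‖z‖) / 2) ^ (-r) :=
          Real.rpow_le_rpow_of_nonpos (by positivity) (by linarith) (by linarith)
      _ = 2 ^ r * (1 + ‖z‖) ^ (-r) := by
          rw [Real.div_rpow (by positivity) two_pos.le, Real.rpow_neg two_pos.le, div_inv_eq_mul,
            mul_comm]
  · simp [indicator_of_notMem hz]

end Scaling

theorem enorm_sub_rpow_le {F : Type*} [SeminormedAddGroup F] (a b : F) {p : ℝ} (hp : 1 ≤ p) :
    ‖a - b‖ₑ ^ p ≤ 2 ^ (p - 1) * (‖a‖ₑ ^ p + ‖b‖ₑ ^ p) :=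
  (ENNReal.rpow_le_rpow enorm_sub_le (by linarith)).trans
    (ENNReal.rpow_add_le_mul_rpow_add_rpow _ _ hp)

theorem enorm_sub_rpow_div_le_of_notMem_ball {E F : Type*} [SeminormedAddCommGroup E]
    [SeminormedAddGroup F] (u : E → F) {p r δ : ℝ} (hp : 1 ≤ p) {x y : E} (hxy : y ∉ ball x δ) :
    ‖u x - u y‖ₑ ^ p / ‖x - y‖ₑ ^ r ≤
      2 ^ (p - 1) * (‖u x‖ₑ ^ p + ‖u y‖ₑ ^ p) *
        (ball (0 : E) δ)ᶜ.indicator (fun z ↦ ‖z‖ₑ ^ (-r)) (x - y) := by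
  have hmem : x - y ∈ (ball (0 : E) δ)ᶜ := by
    rwa [mem_compl_iff, mem_ball_zero_iff, ← dist_eq_norm, dist_comm]
  rw [indicator_of_mem hmem, div_eq_mul_inv, ← ENNReal.rpow_neg]
  gcongr
  exact enorm_sub_rpow_le _ _ hp

section Convolution

variable {G : Type*} [AddGroup G] [MeasurableSpace G] [MeasurableAdd₂ G] [MeasurableNeg G]
  {μ : Measure G} [SFinite μ] [μ.IsAddLeftInvariant] [μ.IsAddRightInvariant] [μ.IsNegInvariant]

theorem setLIntegral_setLIntegral_add_mul_sub_le {a k : G → ℝ≥0∞} (ha : Measurable a)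
    (hk : Measurable k) (s : Set G) :
    ∫⁻ x in s, ∫⁻ y in s, (a x + a y) * k (x - y) ∂μ ∂μ ≤
      2 * (∫⁻ z, k z ∂μ) * ∫⁻ x in s, a x ∂μ := by
  set K := ∫⁻ z, k z ∂μ
  have hkxy : Measurable fun q : G × G ↦ k (q.1 - q.2) := hk.comp measurable_sub
  have hfirst : ∫⁻ x in s, ∫⁻ y in s, a x * k (x - y) ∂μ ∂μ ≤ K * ∫⁻ x in s, a x ∂μ :=
    calc ∫⁻ x in s, ∫⁻ y in s, a x * k (x - y) ∂μ ∂μ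
        = ∫⁻ x in s, a x * ∫⁻ y in s, k (x - y) ∂μ ∂μ :=
          lintegral_congr fun x ↦ lintegral_const_mul _ (hk.comp (measurable_const_sub x))
      _ ≤ ∫⁻ x in s, a x * K ∂μ := lintegral_mono fun x ↦ mul_le_mul' le_rfl
          ((setLIntegral_le_lintegral _ _).trans (lintegral_sub_left_eq_self k x).le)
      _ = K * ∫⁻ x in s, a x ∂μ := by rw [lintegral_mul_const _ ha, mul_comm]
  have hsecond : ∫⁻ x in s, ∫⁻ y in s, a y * k (x - y) ∂μ ∂μ ≤ K * ∫⁻ x in s, a x ∂μ :=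
    calc ∫⁻ x in s, ∫⁻ y in s, a y * k (x - y) ∂μ ∂μ
        = ∫⁻ y in s, a y * ∫⁻ x in s, k (x - y) ∂μ ∂μ := by
          rw [lintegral_lintegral_swap ((ha.comp measurable_snd).mul hkxy).aemeasurable]
          exact lintegral_congr fun y ↦ lintegral_const_mul _ (hk.comp (measurable_sub_const y))
      _ ≤ ∫⁻ y in s, a y * K ∂μ := lintegral_mono fun y ↦ mul_le_mul' le_rfl
          ((setLIntegral_le_lintegral _ _).trans (lintegral_sub_right_eq_self k y).le)
      _ = K * ∫⁻ x in s, a x ∂μ := by rw [lintegral_mul_const _ ha, mul_comm]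
  have hsplit : ∫⁻ x in s, ∫⁻ y in s, (a x + a y) * k (x - y) ∂μ ∂μ =
      (∫⁻ x in s, ∫⁻ y in s, a x * k (x - y) ∂μ ∂μ) +
        ∫⁻ x in s, ∫⁻ y in s, a y * k (x - y) ∂μ ∂μ := by
    have hmeas : Measurable fun x ↦ ∫⁻ y in s, a x * k (x - y) ∂μ :=
      ((ha.comp measurable_fst).mul hkxy).lintegral_prod_right'
    simp_rw [add_mul]
    rw [← lintegral_add_left hmeas]
    exact lintegral_congr fun x ↦
      lintegral_add_left ((hk.comp (measurable_const_sub x)).const_mul _) _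
  rw [hsplit, two_mul, add_mul]
  exact add_le_add hfirst hsecond

end Convolution

theorem setLIntegral_setLIntegral_ball_le_tsum {X ι : Type*} [PseudoMetricSpace X]
    [MeasurableSpace X] [OpensMeasurableSpace X] {μ : Measure X} [SFinite μ] [Countable ι]
    {f : X → X → ℝ≥0∞} (hf : Measurable (Function.uncurry f)) (Ωi : ι → Set X) {δ : ℝ}
    (hδ : 0 < δ) :
    ∫⁻ x in ⋃ i, Ωi i, ∫⁻ y in ball x δ, f x y ∂μ.restrict (⋃ i, Ωi i) ∂μ ≤
      ∑' i, ∫⁻ x in {x | x ∈ ⋃ j, Ωi j ∧ infDist x (Ωi i) < δ},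
        ∫⁻ y in {x | x ∈ ⋃ j, Ωi j ∧ infDist x (Ωi i) < δ}, f x y ∂μ ∂μ := by
  set Ω := ⋃ i, Ωi i
  set U : ι → Set X := fun i ↦ {x | infDist x (Ωi i) < δ}
  set T : ι → Set X := fun i ↦ {x | x ∈ Ω ∧ infDist x (Ωi i) < δ}
  have hU : ∀ i, MeasurableSet (U i) := fun i ↦
    (isOpen_lt (continuous_infDist_pt _) continuous_const).measurableSet
  have hTU : ∀ i, T i = U i ∩ Ω := fun i ↦ by ext x; simp [T, U, and_comm]
  have hpointwise : ∀ x, ∫⁻ y in ball x δ, f x y ∂μ.restrict Ω ≤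
      ∑' i, (U i).indicator (fun x ↦ ∫⁻ y in T i, f x y ∂μ) x := by
    intro x
    rw [Measure.restrict_restrict measurableSet_ball, inter_iUnion]
    refine (lintegral_iUnion_le _ _).trans (ENNReal.tsum_le_tsum fun i ↦ ?_)
    by_cases hx : x ∈ U i
    · rw [indicator_of_mem hx]
      refine lintegral_mono_set fun y ⟨_, hy⟩ ↦ ⟨mem_iUnion.2 ⟨i, hy⟩, ?_⟩
      exact (infDist_zero_of_mem hy).le.trans_lt hδ
    · have hempty : ball x δ ∩ Ωi i = ∅ := by
        refine eq_empty_of_forall_notMem fun y ⟨hyx, hy⟩ ↦ hx ?_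
        exact (infDist_le_dist_of_mem hy).trans_lt (by rwa [dist_comm, ← mem_ball])
      simp [hempty, indicator_of_notMem hx]
  have hmeas : ∀ i, Measurable fun x ↦ ∫⁻ y in T i, f x y ∂μ := fun i ↦ hf.lintegral_prod_right'
  calc ∫⁻ x in Ω, ∫⁻ y in ball x δ, f x y ∂μ.restrict Ω ∂μ
      ≤ ∫⁻ x in Ω, ∑' i, (U i).indicator (fun x ↦ ∫⁻ y in T i, f x y ∂μ) x ∂μ :=
        lintegral_mono hpointwise
    _ = ∑' i, ∫⁻ x in T i, ∫⁻ y in T i, f x y ∂μ ∂μ := by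
        rw [lintegral_tsum fun i ↦ ((hmeas i).indicator (hU i)).aemeasurable]
        refine tsum_congr fun i ↦ ?_
        rw [lintegral_indicator (hU i), Measure.restrict_restrict (hU i), ← hTU]

def gagliardoIntegrand (m : ℕ) (σ p : ℝ) (u : Eucl m → ℝ) (x y : Eucl m) : ℝ≥0∞ :=
  (‖u x - u y‖₊ : ℝ≥0∞) ^ p / (‖x - y‖₊ : ℝ≥0∞) ^ ((m : ℝ) + σ * p)

theorem measurable_gagliardoIntegrand (m : ℕ) (σ p : ℝ) {u : Eucl m → ℝ} (hu : Measurable u) :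
    Measurable (Function.uncurry (gagliardoIntegrand m σ p u)) := by
  unfold gagliardoIntegrand
  fun_prop

theorem gagliardoPow_le_setLIntegral_ball_add (m : ℕ) (σ : ℝ) {p : ℝ} (hp : 1 ≤ p)
    (A : Set (Eucl m)) {u : Eucl m → ℝ} (hu : Measurable u) (δ : ℝ) :
    gagliardoPow m σ p A u ≤
      (∫⁻ x in A, ∫⁻ y in ball x δ, gagliardoIntegrand m σ p u x y ∂volume.restrict A) +
        2 ^ p * (∫⁻ z in (ball (0 : Eucl m) δ)ᶜ, ‖z‖ₑ ^ (-((m : ℝ) + σ * p))) *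
          ∫⁻ x in A, ‖u x‖ₑ ^ p := by
  set a : Eucl m → ℝ≥0∞ := fun x ↦ ‖u x‖ₑ ^ p
  set k : Eucl m → ℝ≥0∞ := (ball (0 : Eucl m) δ)ᶜ.indicator fun z ↦ ‖z‖ₑ ^ (-((m : ℝ) + σ * p))
  have ha : Measurable a := by fun_prop
  have hk : Measurable k := (measurable_enorm.pow_const _).indicator measurableSet_ball.compl
  have h2 : (2 : ℝ≥0∞) ^ (p - 1) ≠ ∞ := ENNReal.rpow_ne_top_of_nonneg (by linarith) (by simp)
  have h2p : (2 : ℝ≥0∞) ^ p = 2 ^ (p - 1) * 2 := by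
    conv_lhs => rw [← sub_add_cancel p 1, ENNReal.rpow_add _ _ two_ne_zero ENNReal.ofNat_ne_top,
      ENNReal.rpow_one]
  have hfar : ∀ x, ∫⁻ y in (ball x δ)ᶜ, gagliardoIntegrand m σ p u x y ∂volume.restrict A ≤
      2 ^ (p - 1) * ∫⁻ y in A, (a x + a y) * k (x - y) := by
    intro x
    rw [← lintegral_const_mul' _ _ h2]
    refine (setLIntegral_mono' measurableSet_ball.compl fun y hy ↦ ?_).trans
      (setLIntegral_le_lintegral _ _)
    exact (enorm_sub_rpow_div_le_of_notMem_ball u hp hy).trans_eq (mul_assoc _ _ _)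
  have hfar_meas : Measurable fun x ↦ ∫⁻ y in A, (a x + a y) * k (x - y) :=
    Measurable.lintegral_prod_right' (f := fun q ↦ (a q.1 + a q.2) * k (q.1 - q.2)) (by fun_prop)
  calc gagliardoPow m σ p A u
      = ∫⁻ x in A, (∫⁻ y in ball x δ, gagliardoIntegrand m σ p u x y ∂volume.restrict A) +
          ∫⁻ y in (ball x δ)ᶜ, gagliardoIntegrand m σ p u x y ∂volume.restrict A :=
        lintegral_congr fun x ↦ (lintegral_add_compl _ measurableSet_ball).symm
    _ ≤ ∫⁻ x in A, (∫⁻ y in ball x δ, gagliardoIntegrand m σ p u x y ∂volume.restrict A) +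
          2 ^ (p - 1) * ∫⁻ y in A, (a x + a y) * k (x - y) :=
        lintegral_mono fun x ↦ add_le_add le_rfl (hfar x)
    _ = (∫⁻ x in A, ∫⁻ y in ball x δ, gagliardoIntegrand m σ p u x y ∂volume.restrict A) +
          2 ^ (p - 1) * ∫⁻ x in A, ∫⁻ y in A, (a x + a y) * k (x - y) := by
        rw [lintegral_add_right _ (hfar_meas.const_mul _), lintegral_const_mul _ hfar_meas]
    _ ≤ _ := by
        rw [h2p, mul_assoc, mul_assoc, ← mul_assoc 2,
          ← lintegral_indicator measurableSet_ball.compl]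
        gcongr
        exact setLIntegral_setLIntegral_add_mul_sub_le ha hk A

theorem gagliardo_countable_almost_additivity_general
    (m : ℕ) (σ p : ℝ) (hσ0 : 0 < σ) (hp : 1 ≤ p) :
    ∃ C : ℝ, 0 < C ∧ ∀ (δ : ℝ), 0 < δ →
      ∀ (ι : Type) (_ : Countable ι) (Ωi : ι → Set (Eucl m)) (u : Eucl m → ℝ),
        Measurable u →
        gagliardoPow m σ p (⋃ i, Ωi i) u ≤
          (∑' i : ι, gagliardoPow m σ p
              {x : Eucl m | x ∈ (⋃ j, Ωi j) ∧ Metric.infDist x (Ωi i) < δ} u)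
            + ENNReal.ofReal C * ENNReal.ofReal δ ^ (-(σ * p)) *
                ∫⁻ x in (⋃ i, Ωi i), (‖u x‖₊ : ℝ≥0∞) ^ p := by
  set K := ∫⁻ z in (ball (0 : Eucl m) 1)ᶜ, ‖z‖ₑ ^ (-((m : ℝ) + σ * p))
  have hK : K ≠ ∞ := by
    refine (setLIntegral_compl_ball_rpow_neg_enorm_lt_top volume ?_).ne
    rw [finrank_euclideanSpace_fin]
    linarith [mul_pos hσ0 (zero_lt_one.trans_le hp)]
  refine ⟨2 ^ p * K.toReal + 1, by positivity, fun δ hδ ι _ Ωi u hu ↦ ?_⟩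
  have htail : ∫⁻ z in (ball (0 : Eucl m) δ)ᶜ, ‖z‖ₑ ^ (-((m : ℝ) + σ * p)) =
      ENNReal.ofReal δ ^ (-(σ * p)) * K := by
    simpa only [finrank_euclideanSpace_fin] using
      setLIntegral_compl_ball_rpow_neg_enorm (volume : Measure (Eucl m)) hδ (σ * p)
  have hC : 2 ^ p * K ≤ ENNReal.ofReal (2 ^ p * K.toReal + 1) := by
    rw [ENNReal.ofReal_add (by positivity) zero_le_one, ENNReal.ofReal_mul (by positivity),
      ENNReal.ofReal_toReal hK, ← ENNReal.ofReal_rpow_of_pos two_pos, ENNReal.ofReal_ofNat]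
    exact le_self_add
  calc gagliardoPow m σ p (⋃ i, Ωi i) u
      ≤ _ + _ := gagliardoPow_le_setLIntegral_ball_add m σ hp _ hu δ
    _ ≤ _ := by
        refine add_le_add
          (setLIntegral_setLIntegral_ball_le_tsum (measurable_gagliardoIntegrand m σ p hu) Ωi hδ) ?_
        rw [htail, ← mul_assoc, mul_right_comm (2 ^ p)]
        gcongr
        exact le_rfl

/-- **Countable almost-additivity of the Gagliardo seminorm.**
Let `m ≥ 1`, `0 < σ < 1`, `1 ≤ p < ∞`. There is a constant `C > 0`, depending only on `m`,
`σ` and `p`, such that for every `δ > 0`, every finite or countable family `(Ω_i)_{i ∈ ι}` of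
subsets of `ℝ^m` with union `Ω`, and every measurable `u : Ω → ℝ`,
`|u|_{W^{σ,p}(Ω)}^p ≤ ∑_i |u|_{W^{σ,p}(Ω_{i,δ})}^p + C δ^{-σp} ‖u‖_{L^p(Ω)}^p`
where `Ω_{i,δ} = {x ∈ Ω : dist(x, Ω_i) < δ}`. -/
theorem gagliardo_countable_almost_additivity
    (m : ℕ) (hm : 1 ≤ m) (σ p : ℝ) (hσ0 : 0 < σ) (hσ1 : σ < 1) (hp : 1 ≤ p) :
    ∃ C : ℝ, 0 < C ∧ ∀ (δ : ℝ), 0 < δ →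
      ∀ (ι : Type) (_ : Countable ι) (Ωi : ι → Set (Eucl m)) (u : Eucl m → ℝ),
        Measurable u →
        gagliardoPow m σ p (⋃ i, Ωi i) u ≤
          (∑' i : ι, gagliardoPow m σ p
              {x : Eucl m | x ∈ (⋃ j, Ωi j) ∧ Metric.infDist x (Ωi i) < δ} u)
            + ENNReal.ofReal C * ENNReal.ofReal δ ^ (-(σ * p)) *
                ∫⁻ x in (⋃ i, Ωi i), (‖u x‖₊ : ℝ≥0∞) ^ p :=
  gagliardo_countable_almost_additivity_general m σ p hσ0 hp
end
end

section
/- Let 1 ≤ p < ∞, let (X, 𝒳, μ) be a measure space, let u : X → ℝ be a measurable map that does not vanish μ-almost everywhere, and let (u_n)_{n∈ℕ} be a sequence in L^p(X, μ) converging to u in L^p(X, μ). Then there exist a μ-summable function w : X → [0, +∞] with ∫_X w dμ > 0 and a subsequence (u_{n_i})_{i∈ℕ} such that for every measure space (Y, 𝒴, λ) and every measurable map γ : Y → X with w ∘ γ ∈ L^1(Y, λ), one has: u_{n_i} ∘ γ ∈ L^p(Y, λ) for every i, u_{n_i} ∘ γ → u ∘ γ in L^p(Y, λ) as i → ∞,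 and ∫_Y |u ∘ γ|^p dλ ≤ 2 (∫_Y w ∘ γ dλ / ∫_X w dμ) ∫_X |u|^p dμ. -/
open MeasureTheory
open scoped ENNReal
noncomputable section

/-!
Pass to a subsequence with `∑ 2^i ∫ |u_{n_i} - u|^p dμ < ∫ |u|^p dμ` and take
`w = |u|^p + ∑ 2^i |u_{n_i} - u|^p`, so that `∫ |u|^p dμ ≤ ∫ w dμ ≤ 2 ∫ |u|^p dμ`. Since `w`
dominates `|u|^p` and each `2^i |u_{n_i} - u|^p` pointwise, integrability of `w ∘ γ` gives
`∫ |u ∘ γ|^p dλ ≤ ∫ w ∘ γ dλ` and `∫ |u_{n_i} ∘ γ - u ∘ γ|^p dλ ≤ 2^{-i} ∫ w ∘ γ dλ`.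
-/

open Filter Topology

theorem Filter.Tendsto.exists_strictMono_tsum_mul_lt {f : ℕ → ℝ≥0∞}
    (hf : Tendsto f atTop (𝓝 0)) {c : ℕ → ℝ≥0∞} (hc : ∀ i, c i ≠ ∞) {ε : ℝ≥0∞} (hε : ε ≠ 0) :
    ∃ φ : ℕ → ℕ, StrictMono φ ∧ ∑' i, c i * f (φ i) < ε := by
  obtain ⟨δ, hδ_pos, hδ_sum⟩ := ENNReal.exists_pos_tsum_mul_lt_of_countable hε c hc
  obtain ⟨φ, hφ_mono, hφ_le⟩ := extraction_forall_of_eventually fun i =>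
    hf.eventually (ge_mem_nhds (ENNReal.coe_pos.2 (hδ_pos i)))
  refine ⟨φ, hφ_mono, lt_of_le_of_lt (ENNReal.tsum_le_tsum fun i => ?_) hδ_sum⟩
  gcongr
  exact hφ_le i

section LpOfReal

variable {α E : Type*} [MeasurableSpace α] {μ : Measure α} [NormedAddCommGroup E] {p : ℝ}

theorem eLpNorm_ofReal_rpow (hp : 0 < p) (f : α → E) :
    eLpNorm f (ENNReal.ofReal p) μ ^ p = ∫⁻ x, ‖f x‖ₑ ^ p ∂μ := by
  rw [eLpNorm_eq_eLpNorm' (by simpa using hp) ENNReal.ofReal_ne_top, ENNReal.toReal_ofReal hp.le,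
    lintegral_rpow_enorm_eq_rpow_eLpNorm' hp]

theorem lintegral_enorm_rpow_eq_zero_iff (hp : 0 < p) {f : α → E}
    (hf : AEStronglyMeasurable f μ) : ∫⁻ x, ‖f x‖ₑ ^ p ∂μ = 0 ↔ f =ᵐ[μ] 0 := by
  rw [← eLpNorm_ofReal_rpow hp, ENNReal.rpow_eq_zero_iff_of_pos hp,
    eLpNorm_eq_zero_iff hf (by simpa using hp)]

theorem memLp_ofReal_of_lintegral_lt_top (hp : 0 < p) {f : α → E}
    (hf : AEStronglyMeasurable f μ) (hfp : ∫⁻ x, ‖f x‖ₑ ^ p ∂μ < ∞) :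
    MemLp f (ENNReal.ofReal p) μ :=
  ⟨hf, (eLpNorm_lt_top_iff_lintegral_rpow_enorm_lt_top (by simpa using hp)
    ENNReal.ofReal_ne_top).2 (by rwa [ENNReal.toReal_ofReal hp.le])⟩

theorem tendsto_eLpNorm_ofReal_zero_iff {ι : Type*} {l : Filter ι} (hp : 0 < p)
    {f : ι → α → E} :
    Tendsto (fun n => eLpNorm (f n) (ENNReal.ofReal p) μ) l (𝓝 0) ↔
      Tendsto (fun n => ∫⁻ x, ‖f n x‖ₑ ^ p ∂μ) l (𝓝 0) := by
  simp_rw [← eLpNorm_ofReal_rpow hp]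
  refine ⟨fun h => ?_, fun h => ?_⟩
  · simpa [hp] using h.ennrpow_const p
  · simpa [hp, ENNReal.rpow_rpow_inv hp.ne'] using h.ennrpow_const p⁻¹

end LpOfReal

def fugledeWeight {X E : Type*} [NormedAddCommGroup E] (p : ℝ) (f : X → E) (g : ℕ → X → E)
    (x : X) : ℝ≥0∞ :=
  ‖f x‖ₑ ^ p + ∑' i, 2 ^ i * ‖g i x - f x‖ₑ ^ p

namespace fugledeWeight

variable {X E : Type*} [NormedAddCommGroup E] {p : ℝ} {f : X → E} {g : ℕ → X → E}

theorem enorm_rpow_le (x : X) : ‖f x‖ₑ ^ p ≤ fugledeWeight p f g x :=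
  le_self_add

theorem two_pow_mul_enorm_sub_rpow_le (i : ℕ) (x : X) :
    2 ^ i * ‖g i x - f x‖ₑ ^ p ≤ fugledeWeight p f g x :=
  (ENNReal.le_tsum i).trans le_add_self

variable [MeasurableSpace X] {ν : Measure X}

theorem measurable [MeasurableSpace E] [OpensMeasurableSpace E] [MeasurableSub₂ E]
    (hf : Measurable f) (hg : ∀ i, Measurable (g i)) : Measurable (fugledeWeight p f g) :=
  (hf.enorm.pow_const p).add <|
    Measurable.tsum fun i => ((hg i).sub hf).enorm.pow_const p |>.const_mul _

theorem lintegral_eq (hf : AEStronglyMeasurable f ν) (hg : ∀ i, AEStronglyMeasurable (g i) ν) :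
    ∫⁻ x, fugledeWeight p f g x ∂ν =
      ∫⁻ x, ‖f x‖ₑ ^ p ∂ν + ∑' i, 2 ^ i * ∫⁻ x, ‖g i x - f x‖ₑ ^ p ∂ν := by
  simp only [fugledeWeight]
  rw [lintegral_add_left' (hf.enorm.pow_const p),
    lintegral_tsum (f := fun i x => 2 ^ i * ‖g i x - f x‖ₑ ^ p)
      fun i => (((hg i).sub hf).enorm.pow_const p).const_mul _]
  simp_rw [lintegral_const_mul' _ _ (ENNReal.pow_ne_top ENNReal.ofNat_ne_top)]

theorem lintegral_enorm_sub_rpow_le (i : ℕ) :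
    ∫⁻ x, ‖g i x - f x‖ₑ ^ p ∂ν ≤ 2⁻¹ ^ i * ∫⁻ x, fugledeWeight p f g x ∂ν := by
  calc ∫⁻ x, ‖g i x - f x‖ₑ ^ p ∂ν = 2⁻¹ ^ i * ∫⁻ x, 2 ^ i * ‖g i x - f x‖ₑ ^ p ∂ν := by
        rw [lintegral_const_mul' _ _ (ENNReal.pow_ne_top ENNReal.ofNat_ne_top), ← mul_assoc,
          ← mul_pow, ENNReal.inv_mul_cancel two_ne_zero ENNReal.ofNat_ne_top, one_pow, one_mul]
    _ ≤ 2⁻¹ ^ i * ∫⁻ x, fugledeWeight p f g x ∂ν := by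
        gcongr with x
        exact two_pow_mul_enorm_sub_rpow_le i x

theorem memLp {i : ℕ} (hp : 0 < p) (hf : AEStronglyMeasurable f ν) (hg : AEStronglyMeasurable (g i) ν)
    (hW : ∫⁻ x, fugledeWeight p f g x ∂ν < ∞) : MemLp (g i) (ENNReal.ofReal p) ν := by
  have hf_Lp : MemLp f (ENNReal.ofReal p) ν :=
    memLp_ofReal_of_lintegral_lt_top hp hf ((lintegral_mono enorm_rpow_le).trans_lt hW)
  have hgf_Lp : MemLp (g i - f) (ENNReal.ofReal p) ν :=
    memLp_ofReal_of_lintegral_lt_top hp (hg.sub hf)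
      ((lintegral_enorm_sub_rpow_le i).trans_lt (ENNReal.mul_lt_top (by simp) hW))
  simpa using hgf_Lp.add hf_Lp

theorem tendsto_eLpNorm_sub (hp : 0 < p) (hW : ∫⁻ x, fugledeWeight p f g x ∂ν < ∞) :
    Tendsto (fun i => eLpNorm (g i - f) (ENNReal.ofReal p) ν) atTop (𝓝 0) := by
  rw [tendsto_eLpNorm_ofReal_zero_iff hp]
  have h_geom : Tendsto (fun i : ℕ => 2⁻¹ ^ i * ∫⁻ x, fugledeWeight p f g x ∂ν) atTop (𝓝 0) := by
    simpa using ENNReal.Tendsto.mul_const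
      (ENNReal.tendsto_pow_atTop_nhds_zero_of_lt_one (by norm_num)) (Or.inr hW.ne)
  exact tendsto_of_tendsto_of_tendsto_of_le_of_le tendsto_const_nhds h_geom
    (fun _ => zero_le) lintegral_enorm_sub_rpow_le

end fugledeWeight

/-- **Fuglede-type detector for `L^p` convergence.**
Let `1 ≤ p < ∞`, let `(X, μ)` be a measure space, let `u : X → ℝ` be measurable and not
`μ`-a.e. zero, and let `(u_n)` be a sequence in `L^p(X, μ)` converging to `u` in `L^p(X, μ)`.
Then there exist a summable `w : X → [0, +∞]` with `∫_X w dμ > 0` and a subsequence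
`(u_{n_i})` such that for every measure space `(Y, λ)` and every measurable `γ : Y → X` with
`w ∘ γ ∈ L^1(Y, λ)`: each `u_{n_i} ∘ γ ∈ L^p(Y, λ)`, `u_{n_i} ∘ γ → u ∘ γ` in `L^p(Y, λ)`,
and `∫_Y |u ∘ γ|^p dλ ≤ 2 (∫_Y w ∘ γ dλ / ∫_X w dμ) ∫_X |u|^p dμ`. -/
theorem fuglede_detector_Lp
    (p : ℝ) (hp : 1 ≤ p)
    (X : Type) [MeasurableSpace X] (μ : Measure X)
    (u : X → ℝ) (hu : Measurable u) (hu0 : ¬ (u =ᵐ[μ] 0))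
    (un : ℕ → X → ℝ) (hunm : ∀ n, Measurable (un n))
    (hun : ∀ n, MemLp (un n) (ENNReal.ofReal p) μ)
    (hconv : Filter.Tendsto (fun n => eLpNorm (un n - u) (ENNReal.ofReal p) μ)
      Filter.atTop (nhds 0)) :
    ∃ (w : X → ℝ≥0∞) (ni : ℕ → ℕ), Measurable w ∧ (∫⁻ x, w x ∂μ) < ⊤ ∧
      0 < (∫⁻ x, w x ∂μ) ∧ StrictMono ni ∧
      ∀ (Y : Type) [MeasurableSpace Y], ∀ (lam : Measure Y) (γ : Y → X), Measurable γ →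
        (∫⁻ y, w (γ y) ∂lam) < ⊤ →
        (∀ i, MemLp (fun y => un (ni i) (γ y)) (ENNReal.ofReal p) lam) ∧
        Filter.Tendsto
          (fun i => eLpNorm (fun y => un (ni i) (γ y) - u (γ y)) (ENNReal.ofReal p) lam)
          Filter.atTop (nhds 0) ∧
        (∫⁻ y, (‖u (γ y)‖₊ : ℝ≥0∞) ^ p ∂lam) ≤
          2 * ((∫⁻ y, w (γ y) ∂lam) / (∫⁻ x, w x ∂μ)) *
            ∫⁻ x, (‖u x‖₊ : ℝ≥0∞) ^ p ∂μ := by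
  have hp0 : 0 < p := one_pos.trans_le hp
  set ε := ∫⁻ x, ‖u x‖ₑ ^ p ∂μ
  have hε_top : ε < ∞ := by
    have hu_Lp := Lp.memLp_of_cauchy_tendsto (by simpa using hp) hun u hu.aestronglyMeasurable hconv
    exact (eLpNorm_ofReal_rpow hp0 u).symm.trans_lt
      (ENNReal.rpow_lt_top_of_nonneg hp0.le hu_Lp.2.ne)
  have hε_ne : ε ≠ 0 := (lintegral_enorm_rpow_eq_zero_iff hp0 hu.aestronglyMeasurable).not.2 hu0
  obtain ⟨φ, hφ, hφ_sum⟩ :=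
    ((tendsto_eLpNorm_ofReal_zero_iff hp0).1 hconv).exists_strictMono_tsum_mul_lt
      (c := fun i => 2 ^ i) (fun i => ENNReal.pow_ne_top ENNReal.ofNat_ne_top) hε_ne
  set w := fugledeWeight p u fun i => un (φ i)
  have hw_le : ∫⁻ x, w x ∂μ ≤ 2 * ε := by
    rw [fugledeWeight.lintegral_eq hu.aestronglyMeasurable fun i => (hunm _).aestronglyMeasurable,
      two_mul]
    exact add_le_add le_rfl hφ_sum.le
  have hw_top : ∫⁻ x, w x ∂μ < ∞ := hw_le.trans_lt (ENNReal.mul_lt_top (by norm_num) hε_top)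
  have hw_pos : 0 < ∫⁻ x, w x ∂μ :=
    (pos_iff_ne_zero.2 hε_ne).trans_le (lintegral_mono fugledeWeight.enorm_rpow_le)
  refine ⟨w, φ, fugledeWeight.measurable hu fun i => hunm _, hw_top, hw_pos, hφ, ?_⟩
  intro Y _ lam γ hγ hwγ
  -- `w ∘ γ` is, by definition, the weight built from `u ∘ γ` and the `un (φ i) ∘ γ`.
  refine ⟨fun i => fugledeWeight.memLp hp0 (hu.comp hγ).aestronglyMeasurable
    ((hunm _).comp hγ).aestronglyMeasurable hwγ, fugledeWeight.tendsto_eLpNorm_sub hp0 hwγ, ?_⟩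
  show _ ≤ 2 * (_ / _) * ε
  calc ∫⁻ y, ‖u (γ y)‖ₑ ^ p ∂lam ≤ ∫⁻ y, w (γ y) ∂lam :=
        lintegral_mono fun y => fugledeWeight.enorm_rpow_le (γ y)
    _ = (∫⁻ y, w (γ y) ∂lam) / (∫⁻ x, w x ∂μ) * ∫⁻ x, w x ∂μ :=
        (ENNReal.div_mul_cancel hw_pos.ne' hw_top.ne).symm
    _ ≤ (∫⁻ y, w (γ y) ∂lam) / (∫⁻ x, w x ∂μ) * (2 * ε) := by gcongr
    _ = _ := by ring
end
end

section
/- Let Ω ⊂ ℝ^m be a bounded open domain satisfying the segment condition. Then there exists γ₀ > 0 and, for every 0 < γ < γ₀, a smooth diffeomorphism Φ_γ : ℝ^m → ℝ^m such that Φ_γ(Ω̄) ⊂ Ω and such that, as γ → 0, Φ_γ converges to the identity map uniformly on ℝ^m together with all its derivatives: for every j ∈ ℕ, D^j Φ_γ → D^j(id) uniformly on ℝ^m (i.e. Φ_γ → id, DΦ_γ → Id, and D^j Φ_γ → 0 uniformly for j ≥ 2). -/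
open Set
noncomputable section

/-- `Ω` satisfies the segment condition: for every boundary point `x` there are a
neighbourhood `U` of `x` and a nonzero vector `z` such that `y + t z ∈ Ω` for every
`y ∈ U ∩ Ω̄` and every `0 < t < 1`. -/
def SegmentCondition (m : ℕ) (Ω : Set (Eucl m)) : Prop :=
  ∀ x ∈ frontier Ω, ∃ U : Set (Eucl m), IsOpen U ∧ x ∈ U ∧ ∃ z : Eucl m, z ≠ 0 ∧
    ∀ y ∈ U ∩ closure Ω, ∀ t : ℝ, 0 < t → t < 1 → y + t • z ∈ Ω

/-! Cover the compact boundary by finitely many supports of smooth fields `ψᵢ • zᵢ`, where `zᵢ`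
is the segment-condition direction at a boundary point and the bump `ψᵢ` lives in the matching
neighbourhood, and let `Φ_γ` be the composite of the maps `x ↦ x + γ ψᵢ(x) zᵢ`. Each map fixes the
points where its field vanishes and sends the other points of `Ω̄` into `Ω`; since every boundary
point is moved by some map, `Φ_γ(Ω̄) ⊆ Ω`. Once `γ` times the Lipschitz constants is below one each
map is a Lipschitz perturbation of the identity, hence a diffeomorphism. Each map is `O(γ)`-close to
the identity in every `C^j` norm, and by Faà di Bruno so is their composite. -/

open Filter Function Topology
open scoped NNReal ContDiff Manifold Nat

section Perturbation

variable {E : Type*} [NormedAddCommGroup E] [NormedSpace ℝ E]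

theorem norm_iteratedFDeriv_id_le_one {i : ℕ} (hi : i ≠ 0) (x : E) :
    ‖iteratedFDeriv ℝ i (fun y : E => y) x‖ ≤ 1 := by
  obtain ⟨k, rfl⟩ := Nat.exists_eq_succ_of_ne_zero hi
  rw [← norm_iteratedFDeriv_fderiv, show fderiv ℝ (fun y : E => y) = fun _ => .id ℝ E from
    funext fun _ => fderiv_fun_id]
  rcases k with _ | k
  · simpa using ContinuousLinearMap.norm_id_le
  · simp [iteratedFDeriv_const_of_ne (Nat.succ_ne_zero k)]

structure SmoothNearId (f : ℝ → E → E) : Prop where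
  contDiff : ∀ γ, ContDiff ℝ ∞ (f γ)
  exists_bound : ∀ j : ℕ, ∃ C, ∀ γ ∈ Icc (0 : ℝ) 1, ∀ i ≤ j, ∀ x,
    ‖iteratedFDeriv ℝ i (fun y => f γ y - y) x‖ ≤ C * γ

namespace SmoothNearId

variable {f g : ℝ → E → E}

theorem exists_nonneg_bound (hf : SmoothNearId f) (j : ℕ) :
    ∃ C, 0 ≤ C ∧ ∀ γ ∈ Icc (0 : ℝ) 1, ∀ i ≤ j, ∀ x,
      ‖iteratedFDeriv ℝ i (fun y => f γ y - y) x‖ ≤ C * γ := by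
  obtain ⟨C, hC⟩ := hf.exists_bound j
  exact ⟨max C 0, le_max_right _ _, fun γ hγ i hi x =>
    (hC γ hγ i hi x).trans (mul_le_mul_of_nonneg_right (le_max_left _ _) hγ.1)⟩

theorem contDiff_sub_id (hf : SmoothNearId f) (γ : ℝ) : ContDiff ℝ ∞ (fun y => f γ y - y) :=
  (hf.contDiff γ).sub contDiff_fun_id

theorem iteratedFDeriv_sub_id (hf : SmoothNearId f) (γ : ℝ) (i : ℕ) (x : E) :
    iteratedFDeriv ℝ i (fun y => f γ y - y) x =
      iteratedFDeriv ℝ i (f γ) x - iteratedFDeriv ℝ i (fun y => y) x :=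
  iteratedFDeriv_sub_apply ((hf.contDiff γ).of_le (mod_cast le_top)).contDiffAt
    contDiff_id.contDiffAt

/-- The bound in the form required by `norm_iteratedFDeriv_comp_le`. -/
theorem exists_norm_iteratedFDeriv_le_pow (hf : SmoothNearId f) (j : ℕ) :
    ∃ D, 1 ≤ D ∧ ∀ γ ∈ Icc (0 : ℝ) 1, ∀ i, 1 ≤ i → i ≤ j → ∀ x,
      ‖iteratedFDeriv ℝ i (f γ) x‖ ≤ D ^ i := by
  obtain ⟨C, hC0, hC⟩ := hf.exists_nonneg_bound j
  refine ⟨1 + C, by linarith, fun γ hγ i hi1 hij x => ?_⟩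
  calc ‖iteratedFDeriv ℝ i (f γ) x‖
      ≤ ‖iteratedFDeriv ℝ i (fun y => y) x‖ + ‖iteratedFDeriv ℝ i (fun y => f γ y - y) x‖ := by
        rw [hf.iteratedFDeriv_sub_id]; exact norm_le_insert' _ _
    _ ≤ 1 + C := add_le_add (norm_iteratedFDeriv_id_le_one (by omega) x)
        ((hC γ hγ i hij x).trans (mul_le_of_le_one_right hC0 hγ.2))
    _ ≤ (1 + C) ^ i := le_self_pow₀ (by linarith) (by omega)

theorem comp (hg : SmoothNearId g) (hf : SmoothNearId f) : SmoothNearId (fun γ => g γ ∘ f γ) where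
  contDiff γ := (hg.contDiff γ).comp (hf.contDiff γ)
  exists_bound j := by
    obtain ⟨Cg, hCg0, hCg⟩ := hg.exists_nonneg_bound j
    obtain ⟨Cf, hCf⟩ := hf.exists_bound j
    obtain ⟨D, hD1, hD⟩ := hf.exists_norm_iteratedFDeriv_le_pow j
    refine ⟨j ! * Cg * D ^ j + Cf, fun γ hγ i hij x => ?_⟩
    have hsplit : (fun y => (g γ ∘ f γ) y - y) =
        (fun y => g γ y - y) ∘ f γ + fun y => f γ y - y := by
      ext y; simp
    have hgf : ContDiff ℝ ∞ ((fun y => g γ y - y) ∘ f γ) :=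
      (hg.contDiff_sub_id γ).comp (hf.contDiff γ)
    have hcomp : ‖iteratedFDeriv ℝ i ((fun y => g γ y - y) ∘ f γ) x‖ ≤ i ! * (Cg * γ) * D ^ i :=
      norm_iteratedFDeriv_comp_le (hg.contDiff_sub_id γ) (hf.contDiff γ)
        (mod_cast le_top) x (fun k hk => hCg γ hγ k (hk.trans hij) _)
        (fun k hk1 hki => hD γ hγ k hk1 (hki.trans hij) x)
    rw [hsplit, iteratedFDeriv_add_apply (hgf.of_le (mod_cast le_top)).contDiffAt
      ((hf.contDiff_sub_id γ).of_le (mod_cast le_top)).contDiffAt]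
    have hfac : (i ! : ℝ) * D ^ i ≤ j ! * D ^ j := by gcongr
    calc _ ≤ _ := norm_add_le _ _
      _ ≤ i ! * (Cg * γ) * D ^ i + Cf * γ := add_le_add hcomp (hCf γ hγ i hij x)
      _ ≤ (j ! * Cg * D ^ j + Cf) * γ := by nlinarith [mul_nonneg hCg0 hγ.1]

theorem tendstoUniformly_iteratedFDeriv (hf : SmoothNearId f) (j : ℕ) {s : Set ℝ}
    (hs : s ⊆ Ici 0) :
    TendstoUniformly (fun γ => iteratedFDeriv ℝ j (f γ)) (iteratedFDeriv ℝ j (fun x : E => x))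
      (𝓝[s] 0) := by
  obtain ⟨C, hC0, hC⟩ := hf.exists_nonneg_bound j
  rw [Metric.tendstoUniformly_iff]
  intro ε hε
  have hsmall : ∀ᶠ γ in 𝓝 (0 : ℝ), γ ≤ 1 ∧ C * γ < ε :=
    (eventually_le_nhds one_pos).and <|
      ((continuous_const_mul C).tendsto' 0 0 (mul_zero C)).eventually (gt_mem_nhds hε)
  filter_upwards [self_mem_nhdsWithin, nhdsWithin_le_nhds hsmall] with γ hγs ⟨hγ1, hγε⟩ x
  rw [dist_comm, dist_eq_norm, ← hf.iteratedFDeriv_sub_id]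
  exact (hC γ ⟨hs hγs, hγ1⟩ j le_rfl x).trans_lt hγε

end SmoothNearId

theorem smoothNearId_id : SmoothNearId (fun _ => (id : E → E)) where
  contDiff _ := contDiff_id
  exists_bound _ := ⟨0, fun γ _ i _ x => by simp⟩

theorem smoothNearId_add_smul {V : E → E} (hV : ContDiff ℝ ∞ V) (hVc : HasCompactSupport V) :
    SmoothNearId (fun γ x => x + γ • V x) where
  contDiff γ := contDiff_id.add (hV.const_smul γ)
  exists_bound j := by
    have hbound : ∀ i, ∃ A, ∀ x, ‖iteratedFDeriv ℝ i V x‖ ≤ A := fun i =>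
      (hVc.iteratedFDeriv i).exists_bound_of_continuous
        (hV.continuous_iteratedFDeriv (mod_cast le_top))
    choose A hA using hbound
    obtain ⟨C, hC⟩ := ((Finset.range (j + 1)).image A).exists_le
    refine ⟨C, fun γ hγ i hi x => ?_⟩
    simp only [add_sub_cancel_left]
    rw [iteratedFDeriv_const_smul_apply' ((hV.of_le (mod_cast le_top)).contDiffAt), norm_smul,
      Real.norm_of_nonneg hγ.1, mul_comm]
    exact mul_le_mul_of_nonneg_right ((hA i x).trans
      (hC _ (Finset.mem_image_of_mem _ (Finset.mem_range.2 (Nat.lt_succ_of_le hi))))) hγ.1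

theorem exists_diffeomorph_add_of_lipschitzWith [CompleteSpace E] {n : ℕ∞ω} {f : E → E}
    {c : ℝ≥0} (hf : ContDiff ℝ n f) (hn : n ≠ 0) (hc : c < 1) (hfc : LipschitzWith c f) :
    ∃ Φ : E ≃ₘ^n⟮𝓘(ℝ, E), 𝓘(ℝ, E)⟯ E, ⇑Φ = fun x => x + f x := by
  have happrox : ApproximatesLinearOn (fun x => x + f x)
      ((ContinuousLinearEquiv.refl ℝ E : E ≃L[ℝ] E) : E →L[ℝ] E) univ c := by
    intro x _ y _
    simpa [dist_eq_norm, add_sub_add_comm] using hfc.dist_le_mul x y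
  have hN : Subsingleton E ∨ c < ‖((ContinuousLinearEquiv.refl ℝ E).symm : E →L[ℝ] E)‖₊⁻¹ := by
    rcases subsingleton_or_nontrivial E with h | h
    · exact Or.inl h
    · right
      simpa [ContinuousLinearEquiv.refl_symm] using hc
  let H : E ≃ₜ E := happrox.toHomeomorph _ hN
  have hderiv : ∀ a, ∃ e : E ≃L[ℝ] E, HasFDerivAt H (e : E →L[ℝ] E) a := by
    intro a
    have hu : ‖-fderiv ℝ f a‖ < 1 := by
      rw [norm_neg]; exact (norm_fderiv_le_of_lipschitz ℝ hfc).trans_lt hc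
    refine ⟨ContinuousLinearEquiv.unitsEquiv ℝ E (Units.oneSub _ hu), ?_⟩
    convert (hasFDerivAt_id (𝕜 := ℝ) a).add ((hf.differentiable hn) a).hasFDerivAt using 1
    · rfl
    ext v
    simp [Units.oneSub]
  choose e he using hderiv
  exact ⟨{ toEquiv := H.toEquiv
           contMDiff_toFun := (contDiff_id.add hf).contMDiff
           contMDiff_invFun := (H.contDiff_symm he (contDiff_id.add hf)).contMDiff }, rfl⟩

theorem eventually_exists_diffeomorph_add_smul [CompleteSpace E] {V : E → E}
    (hV : ContDiff ℝ ∞ V) (hVc : HasCompactSupport V) :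
    ∀ᶠ γ in 𝓝 (0 : ℝ), ∃ Φ : E ≃ₘ⟮𝓘(ℝ, E), 𝓘(ℝ, E)⟯ E, ⇑Φ = fun x => x + γ • V x := by
  obtain ⟨K, hK⟩ := hV.lipschitzWith_of_hasCompactSupport hVc (by simp)
  have hsmall : ∀ᶠ γ in 𝓝 (0 : ℝ), ‖γ‖₊ * K < 1 :=
    ((continuous_nnnorm.mul continuous_const).tendsto' 0 0 (by simp)).eventually
      (gt_mem_nhds one_pos)
  filter_upwards [hsmall] with γ hγ
  exact exists_diffeomorph_add_of_lipschitzWith (hV.const_smul γ) (by simp) hγ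
    ((lipschitzWith_smul γ).comp hK)

def pushAlong : List (E → E) → ℝ → E → E
  | [], _ => id
  | V :: L, γ => pushAlong L γ ∘ fun x => x + γ • V x

theorem smoothNearId_pushAlong {L : List (E → E)}
    (hL : ∀ V ∈ L, ContDiff ℝ ∞ V ∧ HasCompactSupport V) : SmoothNearId (pushAlong L) := by
  induction L with
  | nil => exact smoothNearId_id
  | cons V L ih =>
    obtain ⟨hV, hVc⟩ := hL V List.mem_cons_self
    exact (ih fun W hW => hL W (List.mem_cons_of_mem V hW)).comp (smoothNearId_add_smul hV hVc)

theorem eventually_exists_diffeomorph_pushAlong [CompleteSpace E] {L : List (E → E)}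
    (hL : ∀ V ∈ L, ContDiff ℝ ∞ V ∧ HasCompactSupport V) :
    ∀ᶠ γ in 𝓝 (0 : ℝ), ∃ Φ : E ≃ₘ⟮𝓘(ℝ, E), 𝓘(ℝ, E)⟯ E, ⇑Φ = pushAlong L γ := by
  induction L with
  | nil => exact Eventually.of_forall fun _ => ⟨Diffeomorph.refl _ _ _, rfl⟩
  | cons V L ih =>
    obtain ⟨hV, hVc⟩ := hL V List.mem_cons_self
    filter_upwards [eventually_exists_diffeomorph_add_smul hV hVc,
      ih fun W hW => hL W (List.mem_cons_of_mem V hW)] with γ ⟨Φ₁, hΦ₁⟩ ⟨Φ₂, hΦ₂⟩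
    exact ⟨Φ₁.trans Φ₂, by rw [Diffeomorph.coe_trans, hΦ₁, hΦ₂]; rfl⟩

def IsInwardField (Ω : Set E) (V : E → E) : Prop :=
  ∀ y ∈ closure Ω, V y ≠ 0 → ∀ t ∈ Ioo (0 : ℝ) 1, y + t • V y ∈ Ω

theorem pushAlong_mem {Ω : Set E} {L : List (E → E)} (hL : ∀ V ∈ L, IsInwardField Ω V)
    {γ : ℝ} (hγ : γ ∈ Ioo (0 : ℝ) 1) {x : E} (hx : x ∈ closure Ω)
    (h : x ∈ Ω ∨ ∃ V ∈ L, V x ≠ 0) : pushAlong L γ x ∈ Ω := by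
  induction L generalizing x with
  | nil => exact h.resolve_right (by simp)
  | cons V L ih =>
    have hL' : ∀ W ∈ L, IsInwardField Ω W := fun W hW => hL W (List.mem_cons_of_mem V hW)
    by_cases hVx : V x = 0
    · show pushAlong L γ (x + γ • V x) ∈ Ω
      rw [hVx, smul_zero, add_zero]
      refine ih hL' hx (h.imp_right ?_)
      rintro ⟨W, hW, hWx⟩
      rcases List.mem_cons.1 hW with rfl | hW
      · exact absurd hVx hWx
      · exact ⟨W, hW, hWx⟩
    · have hmem := hL V List.mem_cons_self x hx hVx γ hγ
      exact ih hL' (subset_closure hmem) (Or.inl hmem)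

theorem mapsTo_pushAlong {Ω : Set E} {L : List (E → E)} (hL : ∀ V ∈ L, IsInwardField Ω V)
    (hcover : frontier Ω ⊆ ⋃ V ∈ L, support V) {γ : ℝ} (hγ : γ ∈ Ioo (0 : ℝ) 1) :
    MapsTo (pushAlong L γ) (closure Ω) Ω := by
  intro x hx
  refine pushAlong_mem hL hγ hx (or_iff_not_imp_left.2 fun hxΩ => ?_)
  simpa using hcover ⟨hx, fun hint => hxΩ (interior_subset hint)⟩

end Perturbation

theorem IsCompact.exists_list_subset_iUnion_support {X Y : Type*} [TopologicalSpace X]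
    [TopologicalSpace Y] [T1Space Y] [Zero Y] {K : Set X} (hK : IsCompact K)
    {P : (X → Y) → Prop} (h : ∀ x ∈ K, ∃ V, P V ∧ Continuous V ∧ V x ≠ 0) :
    ∃ L : List (X → Y), (∀ V ∈ L, P V) ∧ K ⊆ ⋃ V ∈ L, support V := by
  choose! V hP hV hVx using h
  obtain ⟨t, htK, hcover⟩ := hK.elim_nhds_subcover (fun x => support (V x))
    fun x hx => (hV x hx).isOpen_support.mem_nhds (hVx x hx)
  refine ⟨t.toList.map V, ?_, ?_⟩
  · simp only [List.mem_map, Finset.mem_toList]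
    rintro _ ⟨x, hx, rfl⟩
    exact hP x (htK x hx)
  · simpa using hcover

theorem SegmentCondition.exists_inwardField {m : ℕ} {Ω : Set (Eucl m)}
    (hseg : SegmentCondition m Ω) {x : Eucl m} (hx : x ∈ frontier Ω) :
    ∃ V : Eucl m → Eucl m, (ContDiff ℝ ∞ V ∧ HasCompactSupport V ∧ IsInwardField Ω V) ∧
      Continuous V ∧ V x ≠ 0 := by
  obtain ⟨U, hU, hxU, z, hz, hseg⟩ := hseg x hx
  obtain ⟨ε, hε, hball⟩ := Metric.isOpen_iff.1 hU x hxU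
  let ψ : ContDiffBump x := ⟨ε / 2, ε, half_pos hε, half_lt_self hε⟩
  have hV : ContDiff ℝ ∞ fun y => ψ y • z := ψ.contDiff.smul contDiff_const
  refine ⟨fun y => ψ y • z, ⟨hV, ψ.hasCompactSupport.smul_right, ?_⟩, hV.continuous, ?_⟩
  · intro y hy hψy t ht
    have hψ : ψ y ≠ 0 := left_ne_zero_of_smul hψy
    have hψpos : 0 < ψ y := ψ.nonneg.lt_of_ne' hψ
    rw [smul_smul]
    refine hseg y ⟨hball ?_, hy⟩ (t * ψ y) (mul_pos ht.1 hψpos)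
      ((mul_le_of_le_one_right ht.1.le ψ.le_one).trans_lt ht.2)
    rw [← ψ.support_eq]
    exact hψ
  · simpa [ψ.one_of_mem_closedBall (Metric.mem_closedBall_self (half_pos hε).le)] using hz

theorem segment_condition_inward_diffeomorphisms_general
    (m : ℕ) (Ω : Set (Eucl m))
    (hΩb : Bornology.IsBounded Ω) (hseg : SegmentCondition m Ω) :
    ∃ γ₀ : ℝ, 0 < γ₀ ∧ ∃ Φ Ψ : ℝ → Eucl m → Eucl m,
      (∀ γ ∈ Set.Ioo (0 : ℝ) γ₀,
        ContDiff ℝ (⊤ : ℕ∞) (Φ γ) ∧ ContDiff ℝ (⊤ : ℕ∞) (Ψ γ) ∧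
        (∀ x, Ψ γ (Φ γ x) = x) ∧ (∀ x, Φ γ (Ψ γ x) = x) ∧
        (∀ x ∈ closure Ω, Φ γ x ∈ Ω)) ∧
      ∀ j : ℕ, TendstoUniformly (fun γ : ℝ => iteratedFDeriv ℝ j (Φ γ))
        (iteratedFDeriv ℝ j (fun x : Eucl m => x)) (nhdsWithin 0 (Set.Ioo 0 γ₀)) := by
  have hfrontier : IsCompact (frontier Ω) :=
    hΩb.isCompact_closure.of_isClosed_subset isClosed_frontier frontier_subset_closure
  obtain ⟨L, hL, hcover⟩ :=
    hfrontier.exists_list_subset_iUnion_support fun x hx => hseg.exists_inwardField hx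
  have hsmooth : ∀ V ∈ L, ContDiff ℝ ∞ V ∧ HasCompactSupport V :=
    fun V hV => ⟨(hL V hV).1, (hL V hV).2.1⟩
  have hev : ∀ᶠ γ in 𝓝[>] 0, γ ∈ Ioo (0 : ℝ) 1 ∧
      ∃ Φ : Eucl m ≃ₘ⟮𝓘(ℝ, Eucl m), 𝓘(ℝ, Eucl m)⟯ Eucl m, ⇑Φ = pushAlong L γ :=
    Eventually.and (Ioo_mem_nhdsGT one_pos)
      (nhdsWithin_le_nhds (eventually_exists_diffeomorph_pushAlong hsmooth))
  obtain ⟨γ₀, hγ₀, hsub⟩ := mem_nhdsGT_iff_exists_Ioo_subset.1 hev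
  have : Nonempty (Eucl m ≃ₘ⟮𝓘(ℝ, Eucl m), 𝓘(ℝ, Eucl m)⟯ Eucl m) := ⟨Diffeomorph.refl _ _ _⟩
  choose! Φ hΦ using fun γ (hγ : γ ∈ Ioo 0 γ₀) => (hsub hγ).2
  refine ⟨γ₀, hγ₀, pushAlong L, fun γ => (Φ γ).symm, fun γ hγ => ?_,
    fun j => (smoothNearId_pushAlong hsmooth).tendstoUniformly_iteratedFDeriv j
      (Ioo_subset_Ioi_self.trans Ioi_subset_Ici_self)⟩
  rw [← hΦ γ hγ]
  refine ⟨(Φ γ).contDiff, (Φ γ).symm.contDiff, (Φ γ).symm_apply_apply, (Φ γ).apply_symm_apply, ?_⟩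
  rw [hΦ γ hγ]
  exact mapsTo_pushAlong (fun V hV => (hL V hV).2.2) hcover (hsub hγ).1

/-- **Inward dilation of a domain satisfying the segment condition.**
Let `Ω ⊆ ℝ^m` be a bounded open domain satisfying the segment condition. Then there are
`γ₀ > 0` and, for `0 < γ < γ₀`, smooth diffeomorphisms `Φ_γ : ℝ^m → ℝ^m` (with smooth
inverses `Ψ_γ`) such that `Φ_γ(Ω̄) ⊆ Ω`, and `Φ_γ` converges to the identity uniformly on
`ℝ^m` together with all its derivatives as `γ → 0`. -/
theorem segment_condition_inward_diffeomorphisms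
    (m : ℕ) (hm : 1 ≤ m) (Ω : Set (Eucl m)) (hΩo : IsOpen Ω)
    (hΩb : Bornology.IsBounded Ω) (hseg : SegmentCondition m Ω) :
    ∃ γ₀ : ℝ, 0 < γ₀ ∧ ∃ Φ Ψ : ℝ → Eucl m → Eucl m,
      (∀ γ ∈ Set.Ioo (0 : ℝ) γ₀,
        ContDiff ℝ (⊤ : ℕ∞) (Φ γ) ∧ ContDiff ℝ (⊤ : ℕ∞) (Ψ γ) ∧
        (∀ x, Ψ γ (Φ γ x) = x) ∧ (∀ x, Φ γ (Ψ γ x) = x) ∧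
        (∀ x ∈ closure Ω, Φ γ x ∈ Ω)) ∧
      ∀ j : ℕ, TendstoUniformly (fun γ : ℝ => iteratedFDeriv ℝ j (Φ γ))
        (iteratedFDeriv ℝ j (fun x : Eucl m => x)) (nhdsWithin 0 (Set.Ioo 0 γ₀)) :=
  segment_condition_inward_diffeomorphisms_general m Ω hΩb hseg
end
end
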